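/- arXiv:1602.01409 — 3 statements merged into one kernel-verified Lean document; each statement's English description precedes it below -/
import Mathlib

section
/- Let π be a permutation of a finite set E into itself with no fixed points, and suppose the induced dependency graph (with edges {e, π(e)}) is a disjoint union of cycles. Then there exists a partition E = E₁ ∪ E₂ ∪ E₃ with π(E_i) ∩ E_i = ∅ for all i and |E_i| ≥ ⌊|E|/3⌋ for all i. -/
/-!
Colour each cycle of `π` by position modulo 3 along the cycle, except that when the length is
`≡ 1 (mod 3)` the last element gets colour 1: consecutive elements then get different colours,
and the three colour classes of a cycle differ in size by at most one. Adding the cycles one at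
a time keeps this balance, provided the colours of the new cycle are permuted so that its larger
classes are paired with the smaller classes built so far. Finally, in a balanced partition of
`n` elements into three classes each class has at least `⌊n/3⌋` elements.
-/

open Finset Function Equiv

section Balanced

variable {ι : Type*}

def IsBalanced (n : ι → ℕ) : Prop := ∀ i j, n i ≤ n j + 1

theorem isBalanced_of_forall_le_le {n : ι → ℕ} (q : ℕ) (h : ∀ i, q ≤ n i ∧ n i ≤ q + 1) :
    IsBalanced n := fun i j => by
  have := h i; have := h j; omega

theorem IsBalanced.sum_div_card_le [Fintype ι] {n : ι → ℕ} (hn : IsBalanced n) (i : ι) :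
    (∑ j, n j) / Fintype.card ι ≤ n i := by
  have hlt : ∑ j, n j < ∑ _j : ι, (n i + 1) :=
    sum_lt_sum (fun j _ => hn j i) ⟨i, mem_univ i, Nat.lt_succ_self _⟩
  rw [sum_const, card_univ, smul_eq_mul] at hlt
  exact Nat.lt_succ_iff.1 ((Nat.div_lt_iff_lt_mul (Fintype.card_pos_iff.2 ⟨i⟩)).2 (by linarith))

theorem exists_perm_isBalanced_add_fin {n : ℕ} {a b : Fin n → ℕ} (ha : IsBalanced a)
    (hb : IsBalanced b) : ∃ σ : Perm (Fin n), IsBalanced fun i => a i + b (σ i) := by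
  -- pair the larger values of `a` with the smaller values of `b`
  let σ := Tuple.sort b * Fin.revPerm * (Tuple.sort a)⁻¹
  have hanti : ∀ i j, a i < a j → b (σ j) ≤ b (σ i) := fun i j h =>
    Tuple.monotone_sort b <| Fin.rev_le_rev.2 <|
      ((Tuple.monotone_sort a).reflect_lt (by simpa using h)).le
  refine ⟨σ, fun i j => ?_⟩
  have := ha i j; have := ha j i; have := hb (σ i) (σ j)
  show a i + b (σ i) ≤ a j + b (σ j) + 1
  rcases lt_trichotomy (a i) (a j) with h | h | h
  · have := hanti i j h; omega
  · omega
  · have := hanti j i h; omega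

theorem exists_perm_isBalanced_add [Fintype ι] {a b : ι → ℕ} (ha : IsBalanced a)
    (hb : IsBalanced b) : ∃ σ : Perm ι, IsBalanced fun i => a i + b (σ i) := by
  let e := Fintype.equivFin ι
  obtain ⟨σ, hσ⟩ := exists_perm_isBalanced_add_fin (a := a ∘ e.symm) (b := b ∘ e.symm)
    (fun _ _ => ha _ _) (fun _ _ => hb _ _)
  exact ⟨e.trans (σ.trans e.symm), fun i j => by simpa using hσ (e i) (e j)⟩

end Balanced

section CycleColor

variable {K : ℕ}

/-- Colour of position `k` on a cycle of length `m`. When `m ≡ 1 (mod K)`, position `m - 1`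
would share colour 0 with its successor, so it gets colour 1 instead, which also differs from the
colour `K - 1` of its predecessor as soon as `K ≥ 3`. -/
def cycleColor (K m k : ℕ) : ZMod K :=
  if (m : ZMod K) = 1 ∧ k + 1 = m then 1 else k

theorem natCast_zmod_ne_zero_of_pos_of_lt {n : ℕ} (h0 : 0 < n) (hn : n < K) :
    (n : ZMod K) ≠ 0 := by
  rw [Ne, ZMod.natCast_eq_zero_iff]
  exact Nat.not_dvd_of_pos_of_lt h0 hn

theorem cycleColor_succ_mod_ne {m k : ℕ} (hK : 3 ≤ K) (hm : 2 ≤ m) (hk : k < m) :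
    cycleColor K m ((k + 1) % m) ≠ cycleColor K m k := by
  have h1 : (1 : ZMod K) ≠ 0 := by
    exact_mod_cast natCast_zmod_ne_zero_of_pos_of_lt (K := K) one_pos (by omega)
  have h2 : (2 : ZMod K) ≠ 0 := by
    exact_mod_cast natCast_zmod_ne_zero_of_pos_of_lt (K := K) two_pos (by omega)
  unfold cycleColor
  rcases Nat.lt_or_ge (k + 1) m with hk1 | hk1
  · rw [Nat.mod_eq_of_lt hk1]
    split_ifs with hnext hcur hcur
    · omega
    · obtain ⟨hm1, rfl⟩ := hnext
      push_cast at hm1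
      exact fun h => h2 (by linear_combination hm1 + h)
    · omega
    · push_cast
      exact fun h => h1 (by linear_combination h)
  · obtain rfl : m = k + 1 := by omega
    rw [Nat.mod_self]
    split_ifs with hnext hcur hcur
    · omega
    · omega
    · simpa using h1.symm
    · exact fun h => hcur ⟨by rw [Nat.cast_add, ← h]; simp, rfl⟩

theorem card_filter_natCast_eq [NeZero K] (n : ℕ) (i : ZMod K) :
    #{k ∈ range n | ((k : ℕ) : ZMod K) = i} = n / K + if i.val < n % K then 1 else 0 := by
  rw [← Nat.mod_eq_of_lt i.val_lt, ← Nat.count_modEq_card n (Nat.pos_of_neZero K),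
    Nat.count_eq_card_filter_range]
  refine congrArg card (filter_congr fun k _ => ?_)
  rw [← ZMod.natCast_eq_natCast_iff, ZMod.natCast_zmod_val]

theorem isBalanced_card_cycleColor [NeZero K] {m : ℕ} (hm : 0 < m) :
    IsBalanced fun i => #{k ∈ range m | cycleColor K m k = i} := by
  by_cases h : (m : ZMod K) = 1
  · obtain ⟨n, rfl⟩ : ∃ n, m = n + 1 := ⟨m - 1, by omega⟩
    have hn : n % K = 0 := by
      rw [← Nat.dvd_iff_mod_eq_zero, ← ZMod.natCast_eq_zero_iff]
      push_cast at h
      linear_combination h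
    have hinit : ∀ i, #{k ∈ range n | cycleColor K (n + 1) k = i} = n / K := fun i => by
      have hcast : ∀ k ∈ range n, cycleColor K (n + 1) k = k := fun k hk =>
        if_neg fun h' => (mem_range.1 hk).ne (Nat.add_right_cancel h'.2)
      rw [filter_congr fun k hk => by rw [hcast k hk], card_filter_natCast_eq, hn]
      simp
    have hlast : cycleColor K (n + 1) n = 1 := if_pos ⟨h, rfl⟩
    refine isBalanced_of_forall_le_le (n / K) fun i => ?_
    rw [range_add_one, filter_insert, hlast]
    split_ifs
    · rw [card_insert_of_notMem (by simp), hinit]; omega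
    · rw [hinit]; omega
  · have hcast : ∀ k, cycleColor K m k = k := fun k => if_neg fun h' => h h'.1
    refine isBalanced_of_forall_le_le (m / K) fun i => ?_
    simp only [hcast]
    rw [card_filter_natCast_eq]
    split_ifs <;> omega

end CycleColor

section Orbit

variable {α : Type*} {f : α → α} {x y : α}

theorem mem_periodicPts_of_mapsTo {s : Set α} (hs : s.Finite) (hmaps : Set.MapsTo f s s)
    (hinj : Set.InjOn f s) (hx : x ∈ s) : x ∈ periodicPts f :=
  have := hs.to_subtype
  Semiconj.mapsTo_periodicPts (g := Subtype.val) (fun _ => rfl)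
    ((hmaps.restrict_inj.2 hinj).mem_periodicPts ⟨x, hx⟩)

variable [DecidableEq α]

noncomputable def orbitFinset (f : α → α) (x : α) : Finset α :=
  (range (minimalPeriod f x)).image (f^[·] x)

theorem mem_orbitFinset_iff (hx : x ∈ periodicPts f) :
    y ∈ orbitFinset f x ↔ ∃ n, f^[n] x = y := by
  refine ⟨fun hy => ?_, fun ⟨n, hn⟩ => ?_⟩
  · obtain ⟨n, -, rfl⟩ := mem_image.1 hy
    exact ⟨n, rfl⟩
  · exact mem_image.2 ⟨n % minimalPeriod f x,
      mem_range.2 (Nat.mod_lt _ (minimalPeriod_pos_of_mem_periodicPts hx)),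
      by rw [iterate_mod_minimalPeriod_eq, hn]⟩

theorem self_mem_orbitFinset (hx : x ∈ periodicPts f) : x ∈ orbitFinset f x :=
  (mem_orbitFinset_iff hx).2 ⟨0, rfl⟩

theorem orbitFinset_subset {s : Finset α} (hmaps : Set.MapsTo f s s) (hx : x ∈ s) :
    orbitFinset f x ⊆ s := fun _ hy => by
  obtain ⟨n, -, rfl⟩ := mem_image.1 hy
  exact hmaps.iterate n hx

theorem apply_mem_orbitFinset_iff (hf : Injective f) (hx : x ∈ periodicPts f) :
    f y ∈ orbitFinset f x ↔ y ∈ orbitFinset f x := by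
  simp only [mem_orbitFinset_iff hx]
  -- a preimage of `f^[n] x` on the orbit is `f^[n + p - 1] x`, where `p` is the period
  refine ⟨fun ⟨n, hn⟩ => ⟨n + minimalPeriod f x - 1, hf ?_⟩,
    fun ⟨n, hn⟩ => ⟨n + 1, by rw [iterate_succ_apply', hn]⟩⟩
  have hpos := minimalPeriod_pos_of_mem_periodicPts hx
  rw [← iterate_succ_apply' f, Nat.succ_eq_add_one, Nat.sub_add_cancel (by omega),
    iterate_add_minimalPeriod_eq, hn]

theorem mapsTo_sdiff_orbitFinset {s : Finset α} (hf : Injective f) (hmaps : Set.MapsTo f s s)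
    (hx : x ∈ periodicPts f) : Set.MapsTo f ↑(s \ orbitFinset f x) ↑(s \ orbitFinset f x) :=
  fun y hy => by
    rw [coe_sdiff, Set.mem_sdiff, mem_coe, mem_coe] at hy ⊢
    exact ⟨hmaps hy.1, (apply_mem_orbitFinset_iff hf hx).not.2 hy.2⟩

end Orbit

section Coloring

variable {α β : Type*} [DecidableEq α] {f : α → α}

def IsProperColoring (f : α → α) (s : Finset α) (c : α → β) : Prop :=
  ∀ x ∈ s, c (f x) ≠ c x

theorem IsProperColoring.piecewise {s t : Finset α} {c d : α → β} (hc : IsProperColoring f s c)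
    (hd : IsProperColoring f t d) (hst : Disjoint s t) (hs : Set.MapsTo f s s)
    (ht : Set.MapsTo f t t) : IsProperColoring f (s ∪ t) (s.piecewise c d) := by
  intro x hx
  rcases mem_union.1 hx with hx | hx
  · rw [piecewise_eq_of_mem _ _ _ hx, piecewise_eq_of_mem _ _ _ (hs hx)]
    exact hc x hx
  · rw [piecewise_eq_of_notMem _ _ _ (disjoint_right.1 hst hx),
      piecewise_eq_of_notMem _ _ _ (disjoint_right.1 hst (ht hx))]
    exact hd x hx

theorem card_filter_union_piecewise [DecidableEq β] {s t : Finset α} (hst : Disjoint s t)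
    (c d : α → β) (b : β) :
    #{x ∈ s ∪ t | s.piecewise c d x = b} = #{x ∈ s | c x = b} + #{x ∈ t | d x = b} := by
  rw [filter_union, card_union_of_disjoint (disjoint_filter_filter hst)]
  congr 1 <;> refine congrArg card (filter_congr fun x hx => ?_)
  · rw [piecewise_eq_of_mem _ _ _ hx]
  · rw [piecewise_eq_of_notMem _ _ _ (disjoint_right.1 hst hx)]

theorem exists_isProperColoring_orbitFinset {K : ℕ} [NeZero K] (hK : 3 ≤ K) {x : α}
    (hx : x ∈ periodicPts f) (hfx : f x ≠ x) :
    ∃ c : α → ZMod K, IsProperColoring f (orbitFinset f x) c ∧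
      IsBalanced fun i => #{y ∈ orbitFinset f x | c y = i} := by
  set m := minimalPeriod f x
  have hm : 2 ≤ m := by
    have := minimalPeriod_pos_of_mem_periodicPts hx
    have : m ≠ 1 := fun h => hfx (minimalPeriod_eq_one_iff_isFixedPt.1 h)
    omega
  have hinj : Set.InjOn (f^[·] x) (Set.Iio m) := iterate_injOn_Iio_minimalPeriod
  set c := cycleColor K m ∘ invFunOn (f^[·] x) (Set.Iio m)
  have hc : ∀ k < m, c (f^[k] x) = cycleColor K m k := fun k hk => by
    simp only [c, comp_apply, hinj.leftInvOn_invFunOn (Set.mem_Iio.2 hk)]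
  refine ⟨c, fun y hy => ?_, ?_⟩
  · obtain ⟨k, hk, rfl⟩ := mem_image.1 hy
    rw [mem_range] at hk
    rw [← iterate_succ_apply' f, ← iterate_mod_minimalPeriod_eq, hc _ (Nat.mod_lt _ (by omega)),
      hc k hk]
    exact cycleColor_succ_mod_ne hK hm hk
  · have hcard : ∀ i, #{y ∈ orbitFinset f x | c y = i} = #{k ∈ range m | cycleColor K m k = i} :=
      fun i => by
        rw [orbitFinset, filter_image,
          card_image_of_injOn (hinj.mono fun k hk => mem_range.1 (mem_filter.1 hk).1)]
        exact congrArg card (filter_congr fun k hk => by rw [hc k (mem_range.1 hk)])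
    simpa only [hcard] using isBalanced_card_cycleColor (K := K) (by omega : 0 < m)

theorem exists_isProperColoring_isBalanced {K : ℕ} (hK : 3 ≤ K) (hf : Injective f)
    {s : Finset α} (hs : Set.MapsTo f s s) (hfix : ∀ x ∈ s, f x ≠ x) :
    ∃ c : α → ZMod K, IsProperColoring f s c ∧ IsBalanced fun i => #{x ∈ s | c x = i} := by
  have : NeZero K := ⟨by omega⟩
  induction s using Finset.strongInduction with
  | H s ih =>
  rcases s.eq_empty_or_nonempty with rfl | ⟨x, hx⟩
  · exact ⟨0, fun _ h => absurd h (notMem_empty _), fun _ _ => by simp⟩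
  have hper : x ∈ periodicPts f := mem_periodicPts_of_mapsTo s.finite_toSet hs hf.injOn hx
  set C := orbitFinset f x
  have hC : Set.MapsTo f C C := fun y hy => (apply_mem_orbitFinset_iff hf hper).2 hy
  have hCs : C ⊆ s := orbitFinset_subset hs hx
  have hF := mapsTo_sdiff_orbitFinset hf hs hper
  obtain ⟨d, hd, hd_bal⟩ := ih (s \ C) (sdiff_ssubset hCs ⟨x, self_mem_orbitFinset hper⟩) hF
    fun y hy => hfix y (mem_sdiff.1 hy).1
  obtain ⟨c, hc, hc_bal⟩ := exists_isProperColoring_orbitFinset hK hper (hfix x hx)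
  obtain ⟨σ, hσ⟩ := exists_perm_isBalanced_add hc_bal hd_bal
  have hd' : IsProperColoring f (s \ C) (σ.symm ∘ d) := fun y hy h => hd y hy (σ.symm.injective h)
  rw [← union_sdiff_of_subset hCs]
  refine ⟨C.piecewise c (σ.symm ∘ d), hc.piecewise hd' disjoint_sdiff hC hF, ?_⟩
  simpa only [card_filter_union_piecewise disjoint_sdiff, comp_apply, symm_apply_eq] using hσ

end Coloring

theorem balanced_three_partition_no_fixed {α : Type*} [DecidableEq α]
    (π : Equiv.Perm α) (E : Finset α)
    (hmaps : ∀ e ∈ E, π e ∈ E) (hfix : ∀ e ∈ E, π e ≠ e) :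
    ∃ E₁ E₂ E₃ : Finset α,
      E = E₁ ∪ E₂ ∪ E₃ ∧
      Disjoint E₁ E₂ ∧ Disjoint E₁ E₃ ∧ Disjoint E₂ E₃ ∧
      (∀ e ∈ E₁, π e ∉ E₁) ∧ (∀ e ∈ E₂, π e ∉ E₂) ∧ (∀ e ∈ E₃, π e ∉ E₃) ∧
      E.card / 3 ≤ E₁.card ∧ E.card / 3 ≤ E₂.card ∧ E.card / 3 ≤ E₃.card := by
  obtain ⟨c, hc, hbal⟩ := exists_isProperColoring_isBalanced (K := 3) le_rfl π.injective
    (fun e he => hmaps e he) hfix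
  have hcard : ∀ i, #E / 3 ≤ #{x ∈ E | c x = i} := fun i => by
    simpa only [← card_eq_sum_card_fiberwise fun _ _ => mem_univ _, ZMod.card] using
      hbal.sum_div_card_le i
  have hdisj : ∀ i j : ZMod 3, i ≠ j → Disjoint {x ∈ E | c x = i} {x ∈ E | c x = j} :=
    fun i j h => disjoint_filter.2 fun _ _ hi hj => h (hi.symm.trans hj)
  have hclass : ∀ i, ∀ e ∈ {x ∈ E | c x = i}, π e ∉ {x ∈ E | c x = i} := fun i e he hπe =>
    hc e (mem_filter.1 he).1 ((mem_filter.1 hπe).2.trans (mem_filter.1 he).2.symm)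
  refine ⟨{x ∈ E | c x = 0}, {x ∈ E | c x = 1}, {x ∈ E | c x = 2}, ?_, hdisj 0 1 (by decide),
    hdisj 0 2 (by decide), hdisj 1 2 (by decide), hclass 0, hclass 1, hclass 2,
    hcard 0, hcard 1, hcard 2⟩
  ext x
  have hcolors : ∀ i : ZMod 3, i = 0 ∨ i = 1 ∨ i = 2 := by decide
  simp only [mem_union, mem_filter]
  rcases hcolors (c x) with h | h | h <;> tauto
end

section
/- Let X₁, …, X_m be independent random variables, each taking values in {-1, 0, 1}, where X_j has P(X_j = 1) = a_j and P(X_j = -1) = b_j with b_j > a_j > 0 for all j. Let A = ∑_j a_j and B = ∑_j b_j. Then P(∑_j X_j ≥ 0) ≤ exp(-(√B - √A)²). -/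
/-!
Markov's inequality for `exp (t * S)`, `S = ∑ j, X j`, bounds `P(S ≥ 0)` by the moment generating
function of `S`, which factors over the independent `X j`. Each factor equals
`1 + a j * (eᵗ - 1) + b j * (e⁻ᵗ - 1) ≤ exp (a j * (eᵗ - 1) + b j * (e⁻ᵗ - 1))`, so
`P(S ≥ 0) ≤ exp (A * (eᵗ - 1) + B * (e⁻ᵗ - 1))` for every `t ≥ 0`, and the optimal choice
`eᵗ = √B / √A` turns the exponent into `-(√B - √A)²`.
-/

open MeasureTheory ProbabilityTheory Real

section ThreeValued

variable {Ω : Type*} {Y : Ω → ℝ}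

lemma exp_mul_eq_of_mem_neg_one_zero_one (hval : ∀ ω, Y ω = -1 ∨ Y ω = 0 ∨ Y ω = 1)
    (t : ℝ) (ω : Ω) :
    exp (t * Y ω) = 1 + {ω | Y ω = 1}.indicator (fun _ ↦ exp t - 1) ω
      + {ω | Y ω = -1}.indicator (fun _ ↦ exp (-t) - 1) ω := by
  rcases hval ω with h | h | h <;> norm_num [Set.indicator, h]

variable [MeasurableSpace Ω] {μ : Measure Ω}

lemma mgf_eq_of_mem_neg_one_zero_one [IsProbabilityMeasure μ] (hY : Measurable Y)
    (hval : ∀ ω, Y ω = -1 ∨ Y ω = 0 ∨ Y ω = 1) (t : ℝ) :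
    mgf Y μ t = 1 + μ.real {ω | Y ω = 1} * (exp t - 1)
      + μ.real {ω | Y ω = -1} * (exp (-t) - 1) := by
  have hone : MeasurableSet {ω | Y ω = 1} := hY (measurableSet_singleton 1)
  have hneg_one : MeasurableSet {ω | Y ω = -1} := hY (measurableSet_singleton (-1))
  simp only [mgf, exp_mul_eq_of_mem_neg_one_zero_one hval t]
  rw [integral_add (by fun_prop) ((integrable_const _).indicator hneg_one),
    integral_add (integrable_const _) ((integrable_const _).indicator hone),
    integral_indicator_const _ hone, integral_indicator_const _ hneg_one]
  simp

lemma mgf_le_exp_of_mem_neg_one_zero_one [IsProbabilityMeasure μ] (hY : Measurable Y)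
    (hval : ∀ ω, Y ω = -1 ∨ Y ω = 0 ∨ Y ω = 1) (t : ℝ) :
    mgf Y μ t ≤ exp (μ.real {ω | Y ω = 1} * (exp t - 1)
      + μ.real {ω | Y ω = -1} * (exp (-t) - 1)) := by
  rw [mgf_eq_of_mem_neg_one_zero_one hY hval, add_assoc, add_comm]
  exact add_one_le_exp _

end ThreeValued

lemma measure_sum_nonneg_le_exp_of_mem_neg_one_zero_one {Ω ι : Type*} [MeasurableSpace Ω]
    {μ : Measure Ω} [IsProbabilityMeasure μ] [Fintype ι] {X : ι → Ω → ℝ}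
    (hmeas : ∀ j, Measurable (X j)) (hind : iIndepFun X μ)
    (hval : ∀ j ω, X j ω = -1 ∨ X j ω = 0 ∨ X j ω = 1) {t : ℝ} (ht : 0 ≤ t) :
    μ.real {ω | 0 ≤ ∑ j, X j ω} ≤ exp (∑ j, (μ.real {ω | X j ω = 1} * (exp t - 1)
      + μ.real {ω | X j ω = -1} * (exp (-t) - 1))) := by
  have hbdd : ∀ j, Integrable (fun ω ↦ exp (t * X j ω)) μ := fun j ↦
    integrable_exp_mul_of_mem_Icc (a := -1) (b := 1) (hmeas j).aemeasurable <|
      ae_of_all _ fun ω ↦ by rcases hval j ω with h | h | h <;> norm_num [h]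
  have hchernoff := measure_ge_le_exp_mul_mgf 0 ht
    (hind.integrable_exp_mul_sum hmeas (s := Finset.univ) fun j _ ↦ hbdd j)
  rw [mul_zero, exp_zero, one_mul, hind.mgf_sum hmeas] at hchernoff
  simp only [Finset.sum_apply] at hchernoff
  rw [exp_sum]
  refine hchernoff.trans (Finset.prod_le_prod (fun j _ ↦ mgf_nonneg) fun j _ ↦ ?_)
  exact mgf_le_exp_of_mem_neg_one_zero_one (hmeas j) (hval j) t

lemma exists_nonneg_mul_exp_sub_one_add_mul_exp_neg_sub_one_eq {A B : ℝ} (hA : 0 < A)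
    (hAB : A ≤ B) : ∃ t, 0 ≤ t ∧ A * (exp t - 1) + B * (exp (-t) - 1) = -(√B - √A) ^ 2 := by
  have hsA : 0 < √A := sqrt_pos.mpr hA
  have hsB : 0 < √B := sqrt_pos.mpr (hA.trans_le hAB)
  refine ⟨log (√B / √A), log_nonneg ((one_le_div hsA).mpr (sqrt_le_sqrt hAB)), ?_⟩
  rw [exp_neg, exp_log (div_pos hsB hsA), inv_div]
  field_simp
  linear_combination (-(√B * (√B - √A))) * sq_sqrt hA.le
    + (-(√A * (√A - √B))) * sq_sqrt (hA.le.trans hAB)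

open MeasureTheory ProbabilityTheory in
theorem chernoff_bound {Ω : Type*} [MeasurableSpace Ω] (μ : Measure Ω)
    [IsProbabilityMeasure μ] (m : ℕ) (X : Fin m → Ω → ℝ)
    (hmeas : ∀ j, Measurable (X j))
    (hind : iIndepFun X μ)
    (hval : ∀ j ω, X j ω = -1 ∨ X j ω = 0 ∨ X j ω = 1)
    (a b : Fin m → ℝ)
    (ha : ∀ j, (μ {ω | X j ω = 1}).toReal = a j)
    (hb : ∀ j, (μ {ω | X j ω = -1}).toReal = b j)
    (hpos : ∀ j, 0 < a j) (hlt : ∀ j, a j < b j) :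
    (μ {ω | 0 ≤ ∑ j, X j ω}).toReal
      ≤ Real.exp (-(Real.sqrt (∑ j, b j) - Real.sqrt (∑ j, a j))^2) := by
  rcases isEmpty_or_nonempty (Fin m) with _ | _
  · simp
  obtain ⟨t, ht, hexponent⟩ := exists_nonneg_mul_exp_sub_one_add_mul_exp_neg_sub_one_eq
    (Finset.sum_pos (fun j _ ↦ hpos j) Finset.univ_nonempty)
    (Finset.sum_le_sum fun j _ ↦ (hlt j).le)
  have hchernoff := measure_sum_nonneg_le_exp_of_mem_neg_one_zero_one hmeas hind hval ht
  simp only [measureReal_def, ha, hb, Finset.sum_add_distrib, ← Finset.sum_mul] at hchernoff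
  rwa [hexponent] at hchernoff
end

section
/- Let π be a permutation of a set V partitioned into communities C₁ (size n₁) and C₂ (size n₂) that preserves each community, with exactly k₁ non-fixed points in C₁ and k₂ in C₂. Let E_intra^π be the set of unordered intra-community pairs {a,b} (both in C₁ or both in C₂, a ≠ b) with π({a,b}) ≠ {a,b}, and let E_tr^π be the set of transposition pairs of π. Then |E_intra^π| = ∑_{i=1,2} [C(k_i, 2) + k_i(n_i - k_i)] - |E_tr^π|. -/
/-! A pair `{a, b}` with `a ≠ b` is fixed by `π` exactly when both endpoints are fixed or `π`
swaps them, and a swapped pair has a moved endpoint. Hence `E_intra` is the set of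
intra-community pairs with a moved endpoint, minus `E_tr`. Inside a community of size `n` with
`k` moved points, those pairs are all pairs except the pairs of fixed points:
`C(n,2) - C(n-k,2) = C(k,2) + k(n-k)`. -/

section

open Finset

theorem Nat.add_choose_two (a b : ℕ) : (a + b).choose 2 = a.choose 2 + a * b + b.choose 2 := by
  rw [Nat.add_choose_eq, Finset.Nat.sum_antidiagonal_eq_sum_range_succ_mk]
  simp only [Finset.sum_range_succ, Finset.sum_range_zero, Nat.choose_zero_right,
    Nat.choose_one_right, Nat.reduceSub]
  ring

variable {α : Type*}

theorem Sym2.map_eq_self_iff {f : α → α} {e : Sym2 α} :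
    e.map f = e ↔ (∀ a ∈ e, f a = a) ∨ ∃ a b, e = s(a, b) ∧ f a = b ∧ f b = a := by
  induction e using Sym2.ind with
  | h x y =>
    simp only [Sym2.map_mk, Sym2.eq_iff, Sym2.mem_iff, forall_eq_or_imp, forall_eq]
    grind

theorem Finset.disjoint_sym2 {s t : Finset α} (h : Disjoint s t) : Disjoint s.sym2 t.sym2 := by
  rw [disjoint_left]
  intro e hs ht
  induction e using Sym2.ind with
  | h x y => exact disjoint_left.mp h (mk_mem_sym2_iff.mp hs).1 (mk_mem_sym2_iff.mp ht).1

variable [DecidableEq α]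

def offDiagPairs (s : Finset α) : Finset (Sym2 α) := {e ∈ s.sym2 | ¬e.IsDiag}

theorem card_offDiagPairs (s : Finset α) : #(offDiagPairs s) = (#s).choose 2 := by
  rw [offDiagPairs, sym2_eq_image, Sym2.filter_image_mk_not_isDiag, Sym2.card_image_offDiag]

theorem offDiagPairs_mono {s t : Finset α} (h : s ⊆ t) : offDiagPairs s ⊆ offDiagPairs t :=
  filter_subset_filter _ (sym2_mono h)

def movedPairs (f : α → α) (s : Finset α) : Finset (Sym2 α) :=
  offDiagPairs s \ offDiagPairs {v ∈ s | f v = v}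

theorem mem_movedPairs {f : α → α} {s : Finset α} {e : Sym2 α} :
    e ∈ movedPairs f s ↔ ¬e.IsDiag ∧ (∀ a ∈ e, a ∈ s) ∧ ∃ a ∈ e, f a ≠ a := by
  simp only [movedPairs, offDiagPairs, mem_sdiff, mem_filter, mem_sym2_iff]
  grind

theorem card_movedPairs (f : α → α) (s : Finset α) :
    #(movedPairs f s) = (#{v ∈ s | f v ≠ v}).choose 2
      + #{v ∈ s | f v ≠ v} * (#s - #{v ∈ s | f v ≠ v}) := by
  have hs : #{v ∈ s | f v ≠ v} + #{v ∈ s | f v = v} = #s := by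
    simpa only [not_not] using card_filter_add_card_filter_not (s := s) (fun v => f v ≠ v)
  have hpairs :=
    card_sdiff_add_card_eq_card (offDiagPairs_mono (filter_subset (fun v => f v = v) s))
  rw [card_offDiagPairs, card_offDiagPairs, ← hs, Nat.add_choose_two] at hpairs
  rw [movedPairs, ← hs, Nat.add_sub_cancel_left]
  omega

theorem disjoint_movedPairs (f : α → α) {s t : Finset α} (h : Disjoint s t) :
    Disjoint (movedPairs f s) (movedPairs f t) :=
  (disjoint_sym2 h).mono (sdiff_subset.trans (filter_subset _ _))
    (sdiff_subset.trans (filter_subset _ _))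

end

theorem intra_pairs_count_general {V : Type*} [Fintype V] [DecidableEq V]
    (π : Equiv.Perm V) (C₁ C₂ : Finset V)
    (hdisj : Disjoint C₁ C₂)
    (n₁ n₂ k₁ k₂ : ℕ) (hn₁ : n₁ = C₁.card) (hn₂ : n₂ = C₂.card)
    (hk₁ : k₁ = (C₁.filter (fun v => π v ≠ v)).card)
    (hk₂ : k₂ = (C₂.filter (fun v => π v ≠ v)).card)
    (Eintra Etr : Finset (Sym2 V))
    (hEintra : Eintra = Finset.univ.filter (fun e : Sym2 V =>
      ¬ e.IsDiag ∧ ((∀ a ∈ e, a ∈ C₁) ∨ (∀ a ∈ e, a ∈ C₂)) ∧ Sym2.map π e ≠ e))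
    (hEtr : Etr = Finset.univ.filter (fun e : Sym2 V =>
      ¬ e.IsDiag ∧ ((∀ a ∈ e, a ∈ C₁) ∨ (∀ a ∈ e, a ∈ C₂)) ∧
        ∃ a b, e = s(a, b) ∧ π a = b ∧ π b = a)) :
    (Eintra.card : ℤ)
      = (k₁.choose 2 + k₁ * (n₁ - k₁) + (k₂.choose 2 + k₂ * (n₂ - k₂)) : ℤ)
        - Etr.card := by
  subst hn₁ hn₂ hk₁ hk₂
  set moved := movedPairs π C₁ ∪ movedPairs π C₂
  have hEintra_eq : Eintra = moved \ Etr := by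
    ext e
    simp only [hEintra, hEtr, moved, Finset.mem_filter, Finset.mem_univ, true_and,
      Finset.mem_sdiff, Finset.mem_union, mem_movedPairs, ne_eq, Sym2.map_eq_self_iff]
    grind
  have hEtr_sub : Etr ⊆ moved := by
    intro e he
    simp only [hEtr, moved, Finset.mem_filter, Finset.mem_univ, true_and, Finset.mem_union,
      mem_movedPairs] at he ⊢
    obtain ⟨hdiag, hC, a, b, rfl, hab, -⟩ := he
    have hmoved : ∃ x ∈ s(a, b), π x ≠ x :=
      ⟨a, Sym2.mem_mk_left a b, fun h => hdiag (by simp_all)⟩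
    rcases hC with hC | hC
    exacts [Or.inl ⟨hdiag, hC, hmoved⟩, Or.inr ⟨hdiag, hC, hmoved⟩]
  rw [hEintra_eq, Finset.card_sdiff_of_subset hEtr_sub,
    Nat.cast_sub (Finset.card_le_card hEtr_sub),
    Finset.card_union_of_disjoint (disjoint_movedPairs π hdisj), card_movedPairs, card_movedPairs]
  push_cast [Nat.cast_sub (Finset.card_filter_le _ _)]
  ring

theorem intra_pairs_count {V : Type*} [Fintype V] [DecidableEq V]
    (π : Equiv.Perm V) (C₁ C₂ : Finset V)
    (hpart : C₁ ∪ C₂ = Finset.univ) (hdisj : Disjoint C₁ C₂)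
    (hπ1 : ∀ v ∈ C₁, π v ∈ C₁) (hπ2 : ∀ v ∈ C₂, π v ∈ C₂)
    (n₁ n₂ k₁ k₂ : ℕ) (hn₁ : n₁ = C₁.card) (hn₂ : n₂ = C₂.card)
    (hk₁ : k₁ = (C₁.filter (fun v => π v ≠ v)).card)
    (hk₂ : k₂ = (C₂.filter (fun v => π v ≠ v)).card)
    (Eintra Etr : Finset (Sym2 V))
    (hEintra : Eintra = Finset.univ.filter (fun e : Sym2 V =>
      ¬ e.IsDiag ∧ ((∀ a ∈ e, a ∈ C₁) ∨ (∀ a ∈ e, a ∈ C₂)) ∧ Sym2.map π e ≠ e))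
    (hEtr : Etr = Finset.univ.filter (fun e : Sym2 V =>
      ¬ e.IsDiag ∧ ((∀ a ∈ e, a ∈ C₁) ∨ (∀ a ∈ e, a ∈ C₂)) ∧
        ∃ a b, e = s(a, b) ∧ π a = b ∧ π b = a)) :
    (Eintra.card : ℤ)
      = (k₁.choose 2 + k₁ * (n₁ - k₁) + (k₂.choose 2 + k₂ * (n₂ - k₂)) : ℤ)
        - Etr.card :=
  intra_pairs_count_general π C₁ C₂ hdisj n₁ n₂ k₁ k₂ hn₁ hn₂ hk₁ hk₂ Eintra Etr hEintra hEtr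
end
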